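/- For the basis vectors x_λ ∈ Λ^m(V*) ⊗ Λ^n(V), the Chevalley generator E_{a,a+1} of gl_{∞/2} acts by E_{a,a+1}(x_λ) = Σ_μ x_μ, where μ ranges over diagrams obtained from the weight diagram of λ by the local moves at positions (a, a+1) listed in the paper's figure 1 (e.g. (∘,<) ↦ (<,∘); (∘,×) ↦ (<,>); (>,∘) ↦ (∘,>); (>,<) ↦ (∘,×) + (×,∘); (>,×) ↦ (×,>); (×,∘) ↦ (<,>); (×,<) ↦ (<,×); all other configurations give 0). -/

import Mathlib

open Classical

/-- Symbols of a weight diagram. -/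
inductive WSym where
  | empty | lt | gt | cross
deriving DecidableEq

/-- Index set for the standard monomial basis of `Λ^m(V*) ⊗ Λ^n(V)`:
`(c, d)` encodes `x_λ = w_{c₁+1/2}∧…∧w_{c_m+1/2} ⊗ v_{d₁+1/2}∧…∧v_{d_n+1/2}`
with strictly decreasing indices (`t : ℕ` encodes the half-integer `t + 1/2`). -/
abbrev XIdx (m n : ℕ) := {c : Fin m → ℕ // StrictAnti c} × {d : Fin n → ℕ // StrictAnti d}

/-- The `gl_{∞/2}`-module `Λ^m(V*) ⊗ Λ^n(V)` in its standard monomial basis. -/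
abbrev Xsp (m n : ℕ) := XIdx m n →₀ ℚ

/-- The operator replacing one factor `v_{u+1/2}` by `v_{v+1/2}` in the `Λ^n(V)`
part (for adjacent `u`, `v` this is the action of the corresponding matrix unit,
extended by the Leibniz rule; a wedge with a repeated factor is `0`). -/
noncomputable def replD {m n : ℕ} (u v : ℕ) : Xsp m n →ₗ[ℚ] Xsp m n :=
  Finsupp.lift (Xsp m n) ℚ (XIdx m n) fun p =>
    ∑ j : Fin n, if p.2.1 j = u then
      (if h : StrictAnti (Function.update p.2.1 j v)
        then Finsupp.single (p.1, ⟨Function.update p.2.1 j v, h⟩) (1 : ℚ) else 0)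
      else 0

/-- The operator replacing one factor `w_{u+1/2}` by `w_{v+1/2}` in the `Λ^m(V*)`
part. -/
noncomputable def replC {m n : ℕ} (u v : ℕ) : Xsp m n →ₗ[ℚ] Xsp m n :=
  Finsupp.lift (Xsp m n) ℚ (XIdx m n) fun p =>
    ∑ i : Fin m, if p.1.1 i = u then
      (if h : StrictAnti (Function.update p.1.1 i v)
        then Finsupp.single (⟨Function.update p.1.1 i v, h⟩, p.2) (1 : ℚ) else 0)
      else 0

/-- The Chevalley raising operator `E_{a,a+1}` (with `a = t + 1/2`) acting on
`Λ^m(V*) ⊗ Λ^n(V)`: `E_{a,a+1} v_{a+1} = v_a` and `E_{a,a+1} w_a = (−1)^{2a+1} w_{a+1}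
= w_{a+1}`, extended by the Leibniz rule. -/
noncomputable def Eraise {m n : ℕ} (t : ℕ) : Xsp m n →ₗ[ℚ] Xsp m n :=
  replD (t + 1) t + replC t (t + 1)

/-- The weight diagram of the basis vector `x_λ` indexed by `p = (c, d)`:
`>` where only a `w`-index sits, `<` where only a `v`-index sits, `×` where both do. -/
noncomputable def diagOf {m n : ℕ} (p : XIdx m n) : ℕ → WSym := fun s =>
  if ∃ i, p.1.1 i = s then (if ∃ j, p.2.1 j = s then WSym.cross else WSym.gt)
  else (if ∃ j, p.2.1 j = s then WSym.lt else WSym.empty)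

/-- The table of local moves at positions `(a, a+1)` from figure 1 of the paper. -/
def movePatterns : List ((WSym × WSym) × (WSym × WSym)) :=
  [((.empty, .lt), (.lt, .empty)),
   ((.empty, .cross), (.lt, .gt)),
   ((.gt, .empty), (.empty, .gt)),
   ((.gt, .lt), (.empty, .cross)),
   ((.gt, .lt), (.cross, .empty)),
   ((.gt, .cross), (.cross, .gt)),
   ((.cross, .empty), (.lt, .gt)),
   ((.cross, .lt), (.lt, .cross))]

/-- `g` is obtained from `f` by one of the listed local moves at positions `t`, `t+1`. -/
def TableMove (t : ℕ) (f g : ℕ → WSym) : Prop :=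
  (∀ s, s ≠ t → s ≠ t + 1 → g s = f s) ∧
  ((f t, f (t + 1)), (g t, g (t + 1))) ∈ movePatterns

/-!
A weight diagram is the same as a pair of subsets of `ℕ`: the positions carrying a `w`-index
(`>` or `×`) and those carrying a `v`-index (`<` or `×`). Reading off figure 1, a table move
at `(t, t+1)` is exactly a change of diagram in which one of these sets undergoes a point move
(the `v`-set moves a point from `t+1` to the free position `t`, or the `w`-set moves a point
from `t` to the free position `t+1`) while the other set stays fixed. On the algebraic side,
`E_{a,a+1}` replaces the factor `v_{a+1}` by `v_a` or the factor `w_a` by `w_{a+1}`; since the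
indices of a wedge are distinct there is at most one such factor, the result vanishes exactly
when the new index is already present, and otherwise, the two indices being adjacent, the new
factor keeps the place of the old one in the ordered wedge, so no sign appears. A strictly
decreasing tuple is determined by its range, so both sides are the same sum of at most two
basis vectors.
-/

namespace WSym

def wMark : WSym → Bool
  | gt | cross => true
  | empty | lt => false

def vMark : WSym → Bool
  | lt | cross => true
  | empty | gt => false

theorem eq_iff_marks {x y : WSym} : x = y ↔ (x.wMark ↔ y.wMark) ∧ (x.vMark ↔ y.vMark) := by
  cases x <;> cases y <;> decide

end WSym

open WSym

theorem mem_movePatterns_iff {x y x' y' : WSym} :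
    ((x, y), (x', y')) ∈ movePatterns ↔
      ((x'.wMark ↔ x.wMark) ∧ (y'.wMark ↔ y.wMark) ∧
        ¬ x.vMark ∧ y.vMark ∧ x'.vMark ∧ ¬ y'.vMark) ∨
      (x.wMark ∧ ¬ y.wMark ∧ ¬ x'.wMark ∧ y'.wMark ∧
        (x'.vMark ↔ x.vMark) ∧ (y'.vMark ↔ y.vMark)) := by
  cases x <;> cases y <;> cases x' <;> cases y' <;> decide

def PointMove (u v : ℕ) (S S' : Set ℕ) : Prop :=
  u ∈ S ∧ v ∉ S ∧ S' = insert v (S \ {u})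

section PointMove

variable {S S' : Set ℕ}

theorem pointMove_iff {u v : ℕ} (huv : u ≠ v) :
    PointMove u v S S' ↔ u ∈ S ∧ v ∉ S ∧ v ∈ S' ∧ u ∉ S' ∧
      ∀ s, s ≠ u → s ≠ v → (s ∈ S' ↔ s ∈ S) := by
  constructor
  · rintro ⟨hu, hv, rfl⟩
    exact ⟨hu, hv, Set.mem_insert _ _, by simp [huv], fun s hsu hsv => by simp [hsu, hsv]⟩
  · rintro ⟨hu, hv, hv', hu', h⟩
    refine ⟨hu, hv, Set.ext fun s => ?_⟩
    by_cases hsv : s = v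
    · simp [hsv, hv']
    by_cases hsu : s = u
    · simp [hsu, hu', huv]
    · simp [hsu, hsv, h s hsu hsv]

theorem set_eq_iff_window (t : ℕ) :
    S' = S ↔ (t ∈ S' ↔ t ∈ S) ∧ (t + 1 ∈ S' ↔ t + 1 ∈ S) ∧
      ∀ s, s ≠ t → s ≠ t + 1 → (s ∈ S' ↔ s ∈ S) := by
  refine ⟨fun h => h ▸ ⟨Iff.rfl, Iff.rfl, fun _ _ _ => Iff.rfl⟩, fun ⟨ht, ht1, h⟩ => ?_⟩
  ext s
  by_cases hs : s = t
  · exact hs ▸ ht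
  by_cases hs1 : s = t + 1
  · exact hs1 ▸ ht1
  exact h s hs hs1

end PointMove

theorem tableMove_iff {t : ℕ} {f g : ℕ → WSym} :
    TableMove t f g ↔
      ({s | (g s).wMark} = {s | (f s).wMark} ∧
        PointMove (t + 1) t {s | (f s).vMark} {s | (g s).vMark}) ∨
      (PointMove t (t + 1) {s | (f s).wMark} {s | (g s).wMark} ∧
        {s | (g s).vMark} = {s | (f s).vMark}) := by
  have hswap : ∀ P : ℕ → Prop,
      (∀ s, s ≠ t + 1 → s ≠ t → P s) ↔ ∀ s, s ≠ t → s ≠ t + 1 → P s :=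
    fun P => forall_congr' fun _ => imp.swap
  rw [pointMove_iff (by omega : t + 1 ≠ t), pointMove_iff (by omega : t ≠ t + 1), hswap,
    set_eq_iff_window t, set_eq_iff_window t, TableMove, mem_movePatterns_iff]
  simp only [eq_iff_marks, Set.mem_ofPred_eq, imp_and, forall_and]
  tauto

theorem Function.range_update_of_injective {ι α : Type*} [DecidableEq ι] {f : ι → α}
    (hf : Function.Injective f) (j : ι) (v : α) :
    Set.range (Function.update f j v) = insert v (Set.range f \ {f j}) := by
  ext s
  constructor
  · rintro ⟨i, rfl⟩
    rcases eq_or_ne i j with rfl | hij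
    · simp
    · rw [Function.update_of_ne hij]
      exact Or.inr ⟨⟨i, rfl⟩, fun h => hij (hf h)⟩
  · rintro (rfl | ⟨⟨i, rfl⟩, hij⟩)
    · exact ⟨j, Function.update_self ..⟩
    · exact ⟨i, Function.update_of_ne (fun h => hij (congrArg f h)) ..⟩

theorem StrictAnti.update_of_adjacent {ι : Type*} [LinearOrder ι] {f : ι → ℕ}
    (hf : StrictAnti f) {j : ι} {v : ℕ} (hv : v ∉ Set.range f)
    (hadj : v = f j + 1 ∨ f j = v + 1) : StrictAnti (Function.update f j v) := by
  have hv' : ∀ i, f i ≠ v := fun i hi => hv ⟨i, hi⟩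
  intro a b hab
  rcases eq_or_ne a j with rfl | ha
  · rw [Function.update_self, Function.update_of_ne hab.ne']
    have := hf hab; have := hv' b; omega
  · rw [Function.update_of_ne ha]
    rcases eq_or_ne b j with rfl | hb
    · rw [Function.update_self]; have := hf hab; have := hv' a; omega
    · rw [Function.update_of_ne hb]; exact hf hab

section StrictAntiTuple

variable {k : ℕ}

noncomputable def replaceEntry (u v : ℕ) (f : {f : Fin k → ℕ // StrictAnti f}) :
    Option {f : Fin k → ℕ // StrictAnti f} :=
  if h : ∃ j, f.1 j = u ∧ StrictAnti (Function.update f.1 j v) then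
    some ⟨Function.update f.1 h.choose v, h.choose_spec.2⟩
  else none

theorem sum_dite_update_eq_elim {M : Type*} [AddCommMonoid M]
    (f : {f : Fin k → ℕ // StrictAnti f}) (u v : ℕ) (G : {f : Fin k → ℕ // StrictAnti f} → M) :
    (∑ j, if f.1 j = u then
        (if h : StrictAnti (Function.update f.1 j v) then G ⟨_, h⟩ else 0) else 0) =
      (replaceEntry u v f).elim 0 G := by
  unfold replaceEntry
  split_ifs with h
  · obtain ⟨hj, hup⟩ := h.choose_spec
    rw [Fintype.sum_eq_single h.choose, if_pos hj, dif_pos hup, Option.elim_some]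
    intro j hne
    rw [if_neg fun hju => hne (f.2.injective (hju.trans hj.symm))]
  · refine Finset.sum_eq_zero fun j _ => ?_
    split_ifs with hju hup
    exacts [absurd ⟨j, hju, hup⟩ h, rfl, rfl]

theorem mem_replaceEntry_iff {u v : ℕ} (hadj : v = u + 1 ∨ u = v + 1)
    {f g : {f : Fin k → ℕ // StrictAnti f}} :
    g ∈ replaceEntry u v f ↔ PointMove u v (Set.range f.1) (Set.range g.1) := by
  have huv : u ≠ v := by omega
  unfold replaceEntry
  constructor
  · split_ifs with h
    · rintro ⟨⟩
      obtain ⟨hj, hup⟩ := h.choose_spec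
      refine ⟨⟨_, hj⟩, fun ⟨i, hi⟩ => ?_, ?_⟩
      · have hij : i ≠ h.choose := fun e => huv (hj.symm.trans (e ▸ hi))
        refine hij (hup.injective ?_)
        rw [Function.update_self, Function.update_of_ne hij, hi]
      · rw [Function.range_update_of_injective f.2.injective, hj]
    · rintro ⟨⟩
  · rintro ⟨⟨j, hj⟩, hv, hg⟩
    have h : ∃ j, f.1 j = u ∧ StrictAnti (Function.update f.1 j v) :=
      ⟨j, hj, f.2.update_of_adjacent hv (hj ▸ hadj)⟩
    rw [dif_pos h, Option.mem_def, Option.some_inj, Subtype.ext_iff,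
      ← StrictAnti.range_inj h.choose_spec.2 g.2, hg,
      Function.range_update_of_injective f.2.injective, h.choose_spec.1]

theorem ne_of_mem_replaceEntry {u v : ℕ} (huv : u ≠ v) {f g : {f : Fin k → ℕ // StrictAnti f}}
    (hg : g ∈ replaceEntry u v f) : g ≠ f := by
  unfold replaceEntry at hg
  split_ifs at hg with h
  · obtain rfl := Option.some_inj.1 hg
    intro e
    have := congrFun (congrArg Subtype.val e) h.choose
    simp only [Function.update_self, h.choose_spec.1] at this
    exact huv this.symm
  · cases hg

end StrictAntiTuple

theorem finsum_mem_option_or {X M : Type*} [AddCommMonoid M] {o₁ o₂ : Option X}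
    (h : ∀ x ∈ o₁, x ∉ o₂) (F : X → M) :
    ∑ᶠ (x) (_ : x ∈ o₁ ∨ x ∈ o₂), F x = o₁.elim 0 F + o₂.elim 0 F := by
  have hfin : ∀ o : Option X, {x | x ∈ o}.Finite := fun o =>
    Set.Subsingleton.finite fun x hx y hy => Option.mem_unique hx hy
  have hsum : ∀ o : Option X, ∑ᶠ (x) (_ : x ∈ o), F x = o.elim 0 F := by
    rintro (_ | a) <;> simp
  rw [← hsum, ← hsum]
  exact finsum_mem_union (Set.disjoint_left.2 h) (hfin o₁) (hfin o₂)

section Basis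

variable {m n : ℕ}

theorem setOf_wMark_diagOf (p : XIdx m n) : {s | (diagOf p s).wMark} = Set.range p.1.1 := by
  ext s
  simp only [diagOf, Set.mem_range, Set.mem_ofPred_eq]
  split_ifs <;> simp_all [wMark]

theorem setOf_vMark_diagOf (p : XIdx m n) : {s | (diagOf p s).vMark} = Set.range p.2.1 := by
  ext s
  simp only [diagOf, Set.mem_range, Set.mem_ofPred_eq]
  split_ifs <;> simp_all [vMark]

theorem tableMove_diagOf_iff {t : ℕ} {p q : XIdx m n} :
    TableMove t (diagOf p) (diagOf q) ↔
      q ∈ (replaceEntry (t + 1) t p.2).map (p.1, ·) ∨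
        q ∈ (replaceEntry t (t + 1) p.1).map (·, p.2) := by
  obtain ⟨q₁, q₂⟩ := q
  simp only [tableMove_iff, setOf_wMark_diagOf, setOf_vMark_diagOf, Option.mem_map,
    Prod.mk.injEq, ← mem_replaceEntry_iff (Or.inr rfl), ← mem_replaceEntry_iff (Or.inl rfl),
    StrictAnti.range_inj q₁.2 p.1.2, StrictAnti.range_inj q₂.2 p.2.2, ← Subtype.ext_iff,
    exists_eq_right_right, eq_comm (a := p.1), eq_comm (a := p.2)]
  exact or_congr and_comm (by simp)

theorem eraise_single (t : ℕ) (p : XIdx m n) :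
    Eraise t (Finsupp.single p (1 : ℚ)) =
      ((replaceEntry (t + 1) t p.2).map (p.1, ·)).elim 0 (Finsupp.single · 1) +
        ((replaceEntry t (t + 1) p.1).map (·, p.2)).elim 0 (Finsupp.single · 1) := by
  simp only [Eraise, replD, replC, LinearMap.add_apply, Finsupp.lift_apply,
    Finsupp.sum_single_index, zero_smul, one_smul, Option.elim_map]
  exact congrArg₂ (· + ·) (sum_dite_update_eq_elim p.2 _ _ fun g => Finsupp.single (p.1, g) 1)
    (sum_dite_update_eq_elim p.1 _ _ fun g => Finsupp.single (g, p.2) 1)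

end Basis

/-- **Lemma 4 (combinatorial form).**  The Chevalley generator `E_{a,a+1}` of
`gl_{∞/2}` (with `a = t + 1/2`) acts on a basis vector `x_λ` of `Λ^m(V*) ⊗ Λ^n(V)` by
`E_{a,a+1} x_λ = Σ_μ x_μ`, where `μ` ranges over the diagrams obtained from the
weight diagram of `λ` by the local moves of figure 1, all with coefficient `+1`. -/
theorem stmt7 {m n : ℕ} (t : ℕ) (p : XIdx m n) :
    Eraise t (Finsupp.single p (1 : ℚ)) =
      ∑ᶠ (q : XIdx m n) (_ : TableMove t (diagOf p) (diagOf q)),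
        Finsupp.single q (1 : ℚ) := by
  have hdisj : ∀ q ∈ (replaceEntry (t + 1) t p.2).map (p.1, ·),
      q ∉ (replaceEntry t (t + 1) p.1).map (·, p.2) := by
    simp only [Option.mem_map]
    rintro _ ⟨g, -, rfl⟩ ⟨f, hf, hfg⟩
    exact ne_of_mem_replaceEntry (by omega) hf (congrArg Prod.fst hfg)
  simp only [eraise_single, tableMove_diagOf_iff, finsum_mem_option_or hdisj]
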